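/- Let (C,S) be a tame quasi-schemoid. Then the diagram [C] is a category: the composition τ∘σ := μ(τ,σ) (the unique μ ∈ S with p_{τσ}^μ ≥ 1) is well defined on composable morphisms of [C], is associative, and the classes of identity morphisms serve as identities. -/
import Mathlib


open CategoryTheory

namespace Schemoid

universe u v u' v'

/-- The set of all morphisms of a category, as a sigma type. -/
abbrev Mor (C : Type u) [Category.{v} C] : Type (max u v) := Σ (x : C) (y : C), x ⟶ y

variable {C : Type u} [Category.{v} C]

/-- The identity morphism at `x`, as an element of `Mor C`. -/
def idMor (x : C) : Mor C := ⟨x, x, 𝟙 x⟩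

/-- `IsComp f g h` means that `f` and `g` are composable (the source of `f` is the
target of `g`) and `h = f ∘ g`. -/
def IsComp (f g h : Mor C) : Prop :=
  ∃ (x y z : C) (a : y ⟶ z) (b : x ⟶ y),
    f = ⟨y, z, a⟩ ∧ g = ⟨x, y, b⟩ ∧ h = ⟨x, z, b ≫ a⟩

/-- The fiber of the concatenation map `π_{στ}` over a morphism `h`. -/
def compFiber (σ τ : Set (Mor C)) (h : Mor C) : Set (Mor C × Mor C) :=
  {p | p.1 ∈ σ ∧ p.2 ∈ τ ∧ IsComp p.1 p.2 h}

/-- A quasi-schemoid structure on the small category `C`: a partition `S` of the set of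
morphisms such that all fibers of the concatenation maps `π_{στ}^μ` over elements of a
common class `μ` have the same cardinality. -/
structure SchemoidStruct (C : Type u) [Category.{v} C] where
  S : Set (Set (Mor C))
  partition : Setoid.IsPartition S
  regular : ∀ σ ∈ S, ∀ τ ∈ S, ∀ μ ∈ S, ∀ f ∈ μ, ∀ g ∈ μ,
      Cardinal.mk (compFiber σ τ f) = Cardinal.mk (compFiber σ τ g)

/-- Two morphisms are equivalent if they lie in a common class of the partition. -/
def Requiv (Q : SchemoidStruct C) (f g : Mor C) : Prop := ∃ σ ∈ Q.S, f ∈ σ ∧ g ∈ σ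

/-- T(i): the set of identities is a union of classes of the partition. -/
def Unital (Q : SchemoidStruct C) : Prop :=
  {f : Mor C | ∃ x, f = idMor x} =
    ⋃₀ {σ | σ ∈ Q.S ∧ (σ ∩ {f : Mor C | ∃ x, f = idMor x}).Nonempty}

/-- A class of the partition which contains an identity morphism; these are the
objects of the diagram `[C]`. -/
def IsIdClass (Q : SchemoidStruct C) (e : Set (Mor C)) : Prop :=
  e ∈ Q.S ∧ ∃ x, idMor x ∈ e

/-- `σ` is a morphism from the identity class `e` to the identity class `e'` in `[C]`:
for every `f ∈ σ` the identity at the source of `f` lies in `e` and the identity at the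
target of `f` lies in `e'`. -/
def IsHomClass (Q : SchemoidStruct C) (e σ e' : Set (Mor C)) : Prop :=
  ∀ f ∈ σ, idMor f.1 ∈ e ∧ idMor f.2.1 ∈ e'

/-- `HasComp Q τ σ μ` means the structure constant `p_{τσ}^μ` is at least 1, i.e. some
composite `g ∘ f` with `g ∈ τ`, `f ∈ σ` lies in `μ`. -/
def HasComp (Q : SchemoidStruct C) (τ σ μ : Set (Mor C)) : Prop :=
  ∃ h ∈ μ, (compFiber τ σ h).Nonempty

/-- T(i) and T(iii): a schemoid is tame if it is unital and, for every composable pair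
`[x] →σ [y] →τ [z]` in `[C]`, there are composable representatives and a unique class `μ`
with `p_{τσ}^μ ≥ 1`. -/
def Tame (Q : SchemoidStruct C) : Prop :=
  Unital Q ∧
  ∀ e₁ e₂ e₃ σ τ : Set (Mor C), IsIdClass Q e₁ → IsIdClass Q e₂ → IsIdClass Q e₃ →
    σ ∈ Q.S → IsHomClass Q e₁ σ e₂ → τ ∈ Q.S → IsHomClass Q e₂ τ e₃ →
    (∃ f ∈ σ, ∃ g ∈ τ, g.1 = f.2.1) ∧ ∃! μ, μ ∈ Q.S ∧ HasComp Q τ σ μ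

end Schemoid

namespace Schemoid

variable {C : Type u} [Category.{v} C]

/-- Every element of a class `μ` with `p_{τσ}^μ ≥ 1` decomposes with factors in `τ, σ`. -/
lemma fiber_nonempty_of_hasComp (Q : SchemoidStruct C) {τ σ μ : Set (Mor C)}
    (hτ : τ ∈ Q.S) (hσ : σ ∈ Q.S) (hμ : μ ∈ Q.S)
    (hc : HasComp Q τ σ μ) {f : Mor C} (hf : f ∈ μ) :
    (compFiber τ σ f).Nonempty := by
  obtain ⟨h, hhμ, hne⟩ := hc
  have hcard := Q.regular τ hτ σ hσ μ hμ h hhμ f hf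
  rw [← Set.nonempty_coe_sort, ← Cardinal.mk_ne_zero_iff] at hne ⊢
  rwa [← hcard]

/-- A composed class has the right source and target classes. -/
lemma homClass_of_hasComp (Q : SchemoidStruct C) {e₁ e₂ e₃ σ τ μ : Set (Mor C)}
    (hσ : σ ∈ Q.S) (hσh : IsHomClass Q e₁ σ e₂) (hτ : τ ∈ Q.S)
    (hτh : IsHomClass Q e₂ τ e₃) (hμ : μ ∈ Q.S) (hc : HasComp Q τ σ μ) :
    IsHomClass Q e₁ μ e₃ := by
  intro f hfμ
  obtain ⟨q, hq1, hq2, x, y, z, a, b, hqa, hqb, hfe⟩ :=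
    fiber_nonempty_of_hasComp Q hτ hσ hμ hc hfμ
  subst hfe
  have h1 := (hσh q.2 hq2).1
  have h2 := (hτh q.1 hq1).2
  rw [hqb] at h1
  rw [hqa] at h2
  exact ⟨h1, h2⟩

/-- For a tame quasi-schemoid `(C, S)`, the diagram `[C]` is a category:
the composition `τ ∘ σ := μ(τ, σ)` (the unique `μ ∈ S` with `p_{τσ}^μ ≥ 1`) is well defined
on composable morphisms of `[C]` (and is again a morphism of `[C]` with the correct source
and target), it is associative, and the classes of identity morphisms serve as identities. -/
theorem diagram_is_category {C : Type u} [Category.{v} C]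
    (Q : SchemoidStruct C) (hQ : Tame Q) :
    -- well-definedness of the composition `μ(τ, σ)` on composable morphisms of `[C]`,
    -- landing in the correct hom-set of `[C]`
    (∀ e₁ e₂ e₃ σ τ : Set (Mor C),
      IsIdClass Q e₁ → IsIdClass Q e₂ → IsIdClass Q e₃ →
      σ ∈ Q.S → IsHomClass Q e₁ σ e₂ → τ ∈ Q.S → IsHomClass Q e₂ τ e₃ →
      (∃! μ, μ ∈ Q.S ∧ HasComp Q τ σ μ) ∧
      (∀ μ, μ ∈ Q.S → HasComp Q τ σ μ → IsHomClass Q e₁ μ e₃)) ∧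
    -- associativity: `σ₃ ∘ (σ₂ ∘ σ₁) = (σ₃ ∘ σ₂) ∘ σ₁`
    (∀ e₁ e₂ e₃ e₄ σ₁ σ₂ σ₃ μ ν α β : Set (Mor C),
      IsIdClass Q e₁ → IsIdClass Q e₂ → IsIdClass Q e₃ → IsIdClass Q e₄ →
      σ₁ ∈ Q.S → IsHomClass Q e₁ σ₁ e₂ →
      σ₂ ∈ Q.S → IsHomClass Q e₂ σ₂ e₃ →
      σ₃ ∈ Q.S → IsHomClass Q e₃ σ₃ e₄ →
      μ ∈ Q.S → HasComp Q σ₂ σ₁ μ →   -- μ = σ₂ ∘ σ₁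
      ν ∈ Q.S → HasComp Q σ₃ σ₂ ν →   -- ν = σ₃ ∘ σ₂
      α ∈ Q.S → HasComp Q σ₃ μ α →    -- α = σ₃ ∘ (σ₂ ∘ σ₁)
      β ∈ Q.S → HasComp Q ν σ₁ β →    -- β = (σ₃ ∘ σ₂) ∘ σ₁
      α = β) ∧
    -- the classes of identities are identities: `σ ∘ e₁ = σ` and `e₂ ∘ σ = σ`
    (∀ e₁ e₂ σ : Set (Mor C),
      IsIdClass Q e₁ → IsIdClass Q e₂ → σ ∈ Q.S → IsHomClass Q e₁ σ e₂ →
      HasComp Q σ e₁ σ ∧ HasComp Q e₂ σ σ) := by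
  refine ⟨?_, ?_, ?_⟩
  · -- well-definedness
    intro e₁ e₂ e₃ σ τ he₁ he₂ he₃ hσ hσh hτ hτh
    refine ⟨(hQ.2 e₁ e₂ e₃ σ τ he₁ he₂ he₃ hσ hσh hτ hτh).2, ?_⟩
    intro μ hμ hc
    exact homClass_of_hasComp Q hσ hσh hτ hτh hμ hc
  · -- associativity
    intro e₁ e₂ e₃ e₄ σ₁ σ₂ σ₃ μ ν α β he₁ he₂ he₃ he₄ hσ₁ hσ₁h hσ₂ hσ₂h hσ₃ hσ₃h
      hμ hμc hν hνc hα hαc hβ hβc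
    have hνh : IsHomClass Q e₂ ν e₄ := homClass_of_hasComp Q hσ₂ hσ₂h hσ₃ hσ₃h hν hνc
    -- decompose a witness of α
    obtain ⟨h, hhα, p, hp1, hp2, x, y, z, a, b, hpa, hpb, hhe⟩ := hαc
    -- decompose p.2 ∈ μ as a composite from σ₂, σ₁
    obtain ⟨q, hq1, hq2, x', y', z', a', b', hqa, hqb, hpe⟩ :=
      fiber_nonempty_of_hasComp Q hσ₂ hσ₁ hμ hμc hp2
    rw [hpb] at hpe
    simp only [Sigma.mk.inj_iff] at hpe
    obtain ⟨rfl, hpe⟩ := hpe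
    rw [heq_eq_eq] at hpe
    simp only [Sigma.mk.inj_iff] at hpe
    obtain ⟨rfl, hpe⟩ := hpe
    rw [heq_eq_eq] at hpe
    subst hpe
    -- the class of a' ≫ a equals ν
    obtain ⟨ν', ⟨hν'S, hν'mem⟩, -⟩ := Q.partition.2 (⟨y', z, a' ≫ a⟩ : Mor C)
    rw [hpa] at hp1
    rw [hqa] at hq1
    rw [hqb] at hq2
    have hν'c : HasComp Q σ₃ σ₂ ν' :=
      ⟨⟨y', z, a' ≫ a⟩, hν'mem, (⟨y, z, a⟩, ⟨y', y, a'⟩), hp1, hq1,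
        y', y, z, a, a', rfl, rfl, rfl⟩
    have huniq₂ := (hQ.2 e₂ e₃ e₄ σ₂ σ₃ he₂ he₃ he₄ hσ₂ hσ₂h hσ₃ hσ₃h).2
    have hν'ν : ν' = ν := by
      obtain ⟨m, -, hm⟩ := huniq₂
      rw [hm ν' ⟨hν'S, hν'c⟩, hm ν ⟨hν, hνc⟩]
    rw [hν'ν] at hν'mem
    -- hence h witnesses HasComp ν σ₁ α
    have hαc' : HasComp Q ν σ₁ α := by
      refine ⟨h, hhα, (⟨y', z, a' ≫ a⟩, ⟨x, y', b'⟩), hν'mem, hq2, ?_⟩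
      refine ⟨x, y', z, a' ≫ a, b', rfl, rfl, ?_⟩
      rw [hhe]
      simp [Category.assoc]
    have huniq₁ := (hQ.2 e₁ e₂ e₄ σ₁ ν he₁ he₂ he₄ hσ₁ hσ₁h hν hνh).2
    obtain ⟨m, -, hm⟩ := huniq₁
    rw [hm α ⟨hα, hαc'⟩, hm β ⟨hβ, hβc⟩]
  · -- identities
    intro e₁ e₂ σ he₁ he₂ hσ hσh
    have hσne : σ.Nonempty :=
      Set.nonempty_iff_ne_empty.mpr (fun h => Q.partition.1 (h ▸ hσ))
    obtain ⟨f, hf⟩ := hσne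
    constructor
    · refine ⟨f, hf, (f, idMor f.1), hf, (hσh f hf).1, ?_⟩
      refine ⟨f.1, f.1, f.2.1, f.2.2, 𝟙 f.1, rfl, rfl, ?_⟩
      show f = ⟨f.1, f.2.1, 𝟙 f.1 ≫ f.2.2⟩
      simp
    · refine ⟨f, hf, (idMor f.2.1, f), (hσh f hf).2, hf, ?_⟩
      refine ⟨f.1, f.2.1, f.2.1, 𝟙 f.2.1, f.2.2, rfl, rfl, ?_⟩
      show f = ⟨f.1, f.2.1, f.2.2 ≫ 𝟙 f.2.1⟩
      simp

end Schemoid
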